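/- The 2-configuration Z_r (union of r vertex-disjoint stars of sizes ⌈i/2⌉, i = 1,…,r) is contagious on K_n^3 with infection threshold r for n large enough, and hence ℓ_n(3,2,r) ≤ |Z_r| = (1/4)((r+1)^2 − 1_{r even}). -/

import Mathlib

/-!
Infected pairs form a growing graph on `[n]`, and a pair `ab` becomes infected as soon as at
least `r` vertices `u ∉ {a, b}` are joined to `a` or `b` by an infected pair: each such `u`
contributes the triple `abu` together with an infected pair inside it.

In `Z_r`, with centers `v₀, …, v_{r-1}`, the pairs `v_i v_j` (`i < j`) get infected by downward
induction on `i`: the leaves of stars `i` and `j` and the centers `v_m` (`m > i`, `m ≠ j`) give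
`⌈(i+1)/2⌉ + ⌈(j+1)/2⌉ + (r - 2 - i) ≥ r` witnesses. Next every pair through a center `v_j`
is infected, witnessed by the leaves of star `j` and the other `r - 1` centers, and finally every
remaining pair, witnessed by all `r` centers.
-/

open Finset

open Classical in
noncomputable def bootStep (V : Finset ℕ) (E : Finset (Finset ℕ)) (j r : ℕ)
    (A : Finset (Finset ℕ)) : Finset (Finset ℕ) :=
  A ∪ (V.powersetCard j).filter (fun J =>
    ∃ K : Fin r → Finset ℕ, ∃ Js : Fin r → Finset ℕ,
      Function.Injective K ∧ Function.Injective Js ∧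
      ∀ i : Fin r, K i ∈ E ∧ Js i ∈ A ∧ Js i ∪ J ⊆ K i)

/-- The infected sets at time `t` of the bootstrap percolation process on a hypergraph
with vertex set `V`, edge set `E`, evolving on `j`-sets with infection threshold `r`. -/
noncomputable def bootProc (V : Finset ℕ) (E : Finset (Finset ℕ)) (j r : ℕ)
    (A0 : Finset (Finset ℕ)) (t : ℕ) : Finset (Finset ℕ) :=
  (bootStep V E j r)^[t] A0

/-- The process on the complete `k`-uniform hypergraph on `V`. -/
noncomputable def compProc (V : Finset ℕ) (k j r : ℕ)
    (A0 : Finset (Finset ℕ)) (t : ℕ) : Finset (Finset ℕ) :=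
  bootProc V (V.powersetCard k) j r A0 t

/-- `A0` is contagious: eventually all `j`-sets of `V` are infected. -/
def Percolates (V : Finset ℕ) (k j r : ℕ) (A0 : Finset (Finset ℕ)) : Prop :=
  ∃ t, compProc V k j r A0 t = V.powersetCard j

/-- `ℓ_n(k,j,r)`: minimum size of a contagious `j`-configuration in `K_n^k`. -/
noncomputable def ellMin (n k j r : ℕ) : ℕ :=
  sInf {m | ∃ A0 : Finset (Finset ℕ), A0 ⊆ (range n).powersetCard j ∧
    A0.card = m ∧ Percolates (range n) k j r A0}

open Classical in
/-- The extension set of a `(k-1)`-set `J` with respect to configuration `C` in the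
complete `k`-uniform hypergraph on `V`. -/
noncomputable def extSet (V : Finset ℕ) (k : ℕ) (C : Finset (Finset ℕ))
    (J : Finset ℕ) : Finset ℕ :=
  V.filter (fun v => ∃ J' ∈ C, J' ≠ J ∧ J' ⊆ insert v J ∧ insert v J ∈ V.powersetCard k)

/-- The configuration Z_r: r vertex-disjoint stars of pairs with centres v i and
leaf sets L i of sizes ceil((i+1)/2) for i = 0,...,r-1. -/
def IsZConfig (n r : ℕ) (v : Fin r → ℕ) (Z : Finset (Finset ℕ)) : Prop :=
  ∃ L : Fin r → Finset ℕ,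
    (∀ i, L i ⊆ range n ∧ v i ∈ range n ∧ v i ∉ L i ∧ (L i).card = (i.val + 2) / 2) ∧
    (∀ i i', i ≠ i' → Disjoint (insert (v i) (L i)) (insert (v i') (L i'))) ∧
    Z = Finset.univ.biUnion (fun i => (L i).image (fun u => {v i, u}))

section Bootstrap

variable {V : Finset ℕ} {E : Finset (Finset ℕ)} {k j r : ℕ} {A0 : Finset (Finset ℕ)}

theorem bootProc_succ (t : ℕ) :
    bootProc V E j r A0 (t + 1) = bootStep V E j r (bootProc V E j r A0 t) :=
  Function.iterate_succ_apply' _ _ _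

theorem bootProc_monotone : Monotone (bootProc V E j r A0) :=
  monotone_nat_of_le_succ fun t => by
    classical
    rw [bootProc_succ, bootStep]
    exact subset_union_left

theorem bootProc_subset_powersetCard (hA0 : A0 ⊆ V.powersetCard j) (t : ℕ) :
    bootProc V E j r A0 t ⊆ V.powersetCard j := by
  induction t with
  | zero => exact hA0
  | succ t ih =>
    classical
    rw [bootProc_succ, bootStep]
    exact union_subset ih (filter_subset _ _)

def EventuallyInfected (V : Finset ℕ) (k j r : ℕ) (A0 : Finset (Finset ℕ))
    (J : Finset ℕ) : Prop :=
  ∃ t, J ∈ compProc V k j r A0 t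

theorem percolates_of_forall_eventuallyInfected (hA0 : A0 ⊆ V.powersetCard j)
    (h : ∀ J ∈ V.powersetCard j, EventuallyInfected V k j r A0 J) : Percolates V k j r A0 := by
  choose! t ht using h
  refine ⟨(V.powersetCard j).sup t, (bootProc_subset_powersetCard hA0 _).antisymm fun J hJ => ?_⟩
  exact bootProc_monotone (le_sup hJ) (ht J hJ)

theorem mem_bootStep_of_extensions {A : Finset (Finset ℕ)} {J : Finset ℕ}
    (hJ : J ∈ V.powersetCard j) (f : Fin r ↪ ℕ) (hf : ∀ i, f i ∈ V \ J)
    (Js : Fin r → Finset ℕ) (hJs : ∀ i, Js i ∈ A ∧ f i ∈ Js i ∧ Js i ⊆ insert (f i) J) :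
    J ∈ bootStep V (V.powersetCard (j + 1)) j r A := by
  obtain ⟨hJV, hJcard⟩ := mem_powersetCard.mp hJ
  have hfV i : f i ∈ V := (mem_sdiff.mp (hf i)).1
  have hfJ i : f i ∉ J := (mem_sdiff.mp (hf i)).2
  have eq_of_mem i i' (h : f i' ∈ insert (f i) J) : i' = i :=
    f.injective ((mem_insert.mp h).resolve_right (hfJ i'))
  classical
  rw [bootStep, mem_union, mem_filter]
  refine Or.inr ⟨hJ, fun i => insert (f i) J, Js, fun i i' h => ?_, fun i i' h => ?_, fun i => ?_⟩
  · replace h : insert (f i) J = insert (f i') J := h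
    exact (eq_of_mem i i' (h ▸ mem_insert_self _ _)).symm
  · exact (eq_of_mem i i' ((hJs i).2.2 (h ▸ (hJs i').2.1))).symm
  · refine ⟨mem_powersetCard.mpr ⟨insert_subset (hfV i) hJV, ?_⟩, (hJs i).1,
      union_subset (hJs i).2.2 (subset_insert _ _)⟩
    rw [card_insert_of_notMem (hfJ i), hJcard]

open Classical in
theorem eventuallyInfected_of_le_card {J : Finset ℕ} (hJ : J ∈ V.powersetCard j)
    (h : r ≤ #{u ∈ V \ J | ∃ J', EventuallyInfected V (j + 1) j r A0 J' ∧ u ∈ J' ∧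
      J' ⊆ insert u J}) :
    EventuallyInfected V (j + 1) j r A0 J := by
  have hf i := mem_filter.mp (orderEmbOfCardLe_mem _ h i)
  choose Js hinf hJs using fun i => (hf i).2
  choose t ht using hinf
  refine ⟨univ.sup t + 1, ?_⟩
  rw [compProc, bootProc_succ]
  exact mem_bootStep_of_extensions hJ (orderEmbOfCardLe _ h).toEmbedding (fun i => (hf i).1)
    Js fun i => ⟨bootProc_monotone (le_sup (mem_univ i)) (ht i), hJs i⟩

theorem pair_mem_powersetCard_two {a b : ℕ} (ha : a ∈ V) (hb : b ∈ V) (hab : a ≠ b) :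
    {a, b} ∈ V.powersetCard 2 :=
  mem_powersetCard.mpr ⟨insert_subset ha (singleton_subset_iff.mpr hb), card_pair hab⟩

theorem eventuallyInfected_pair_of_le_card {a b : ℕ} (ha : a ∈ V) (hb : b ∈ V) (hab : a ≠ b)
    (S : Finset ℕ) (hS : r ≤ #S)
    (hext : ∀ u ∈ S, u ∈ V ∧ u ≠ a ∧ u ≠ b ∧
      (EventuallyInfected V 3 2 r A0 {a, u} ∨ EventuallyInfected V 3 2 r A0 {b, u})) :
    EventuallyInfected V 3 2 r A0 {a, b} := by
  classical
  refine eventuallyInfected_of_le_card (pair_mem_powersetCard_two ha hb hab)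
    (hS.trans (card_le_card fun u hu => ?_))
  obtain ⟨huV, hua, hub, hinf⟩ := hext u hu
  refine mem_filter.mpr ⟨mem_sdiff.mpr ⟨huV, by simp [hua, hub]⟩, ?_⟩
  rcases hinf with hinf | hinf
  · exact ⟨_, hinf, by simp, by grind⟩
  · exact ⟨_, hinf, by simp, by grind⟩

end Bootstrap

def starConfig {r : ℕ} (v : Fin r → ℕ) (L : Fin r → Finset ℕ) : Finset (Finset ℕ) :=
  univ.biUnion fun i => (L i).image fun u => {v i, u}

open Function in
structure IsZStars {r : ℕ} (V : Finset ℕ) (v : Fin r → ℕ) (L : Fin r → Finset ℕ) : Prop where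
  center_mem : ∀ i, v i ∈ V
  leaves_subset : ∀ i, L i ⊆ V
  center_injective : Injective v
  center_not_mem_leaves : ∀ i i', v i ∉ L i'
  leaves_disjoint : Pairwise (Disjoint on L)
  le_card_leaves : ∀ i : Fin r, (i.val + 2) / 2 ≤ #(L i)

theorem eventuallyInfected_leaf {V : Finset ℕ} {r : ℕ} {v : Fin r → ℕ} {L : Fin r → Finset ℕ}
    {i : Fin r} {u : ℕ} (hu : u ∈ L i) :
    EventuallyInfected V 3 2 r (starConfig v L) {v i, u} :=
  ⟨0, mem_biUnion.mpr ⟨i, mem_univ _, mem_image_of_mem _ hu⟩⟩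

namespace IsZStars

variable {V : Finset ℕ} {r : ℕ} {v : Fin r → ℕ} {L : Fin r → Finset ℕ}

theorem starConfig_subset_powersetCard (h : IsZStars V v L) :
    starConfig v L ⊆ V.powersetCard 2 := by
  intro J hJ
  obtain ⟨i, -, hJ⟩ := mem_biUnion.mp hJ
  obtain ⟨u, hu, rfl⟩ := mem_image.mp hJ
  exact pair_mem_powersetCard_two (h.center_mem i) (h.leaves_subset i hu)
    fun hvu => h.center_not_mem_leaves i i (hvu ▸ hu)

theorem eventuallyInfected_centers (h : IsZStars V v L) (i j : Fin r) (hij : i < j) :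
    EventuallyInfected V 3 2 r (starConfig v L) {v i, v j} := by
  have ih (m : Fin r) (him : i < m) (hmj : m ≠ j) :
      EventuallyInfected V 3 2 r (starConfig v L) {v j, v m} := by
    rcases lt_or_gt_of_ne hmj with hmj | hmj
    · rw [pair_comm]; exact h.eventuallyInfected_centers m j hmj
    · exact h.eventuallyInfected_centers j m hmj
  have hvij : v i ≠ v j := h.center_injective.ne hij.ne
  refine eventuallyInfected_pair_of_le_card (h.center_mem i) (h.center_mem j) hvij
    (L i ∪ L j ∪ ((Ioi i).erase j).image v) ?_ fun u hu => ?_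
  · have hLL : Disjoint (L i) (L j) := h.leaves_disjoint hij.ne
    have hLv : Disjoint (L i ∪ L j) (((Ioi i).erase j).image v) := by
      simp only [disjoint_left, mem_union, mem_image]
      rintro _ (hu | hu) ⟨m, -, rfl⟩ <;> exact h.center_not_mem_leaves m _ hu
    rw [card_union_of_disjoint hLv, card_union_of_disjoint hLL,
      card_image_of_injective _ h.center_injective, card_erase_of_mem (mem_Ioi.mpr hij),
      Fin.card_Ioi]
    have := h.le_card_leaves i
    have := h.le_card_leaves j
    have : i.val < j.val := hij
    omega
  · simp only [mem_union, mem_image, mem_erase, mem_Ioi] at hu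
    rcases hu with (hu | hu) | ⟨m, ⟨hmj, him⟩, rfl⟩
    · exact ⟨h.leaves_subset i hu, fun hui => h.center_not_mem_leaves i i (hui ▸ hu),
        fun huj => h.center_not_mem_leaves j i (huj ▸ hu), .inl (eventuallyInfected_leaf hu)⟩
    · exact ⟨h.leaves_subset j hu, fun hui => h.center_not_mem_leaves i j (hui ▸ hu),
        fun huj => h.center_not_mem_leaves j j (huj ▸ hu), .inr (eventuallyInfected_leaf hu)⟩
    · exact ⟨h.center_mem m, h.center_injective.ne him.ne', h.center_injective.ne hmj,
        .inr (ih m him hmj)⟩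
termination_by r - i

theorem eventuallyInfected_centers_of_ne (h : IsZStars V v L) {i j : Fin r} (hij : i ≠ j) :
    EventuallyInfected V 3 2 r (starConfig v L) {v i, v j} := by
  rcases lt_or_gt_of_ne hij with hij | hij
  · exact h.eventuallyInfected_centers i j hij
  · rw [pair_comm]; exact h.eventuallyInfected_centers j i hij

theorem eventuallyInfected_center (h : IsZStars V v L) (j : Fin r) {w : ℕ} (hw : w ∈ V)
    (hwj : w ≠ v j) : EventuallyInfected V 3 2 r (starConfig v L) {v j, w} := by
  by_cases hwv : ∃ m, v m = w
  · obtain ⟨m, rfl⟩ := hwv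
    exact h.eventuallyInfected_centers_of_ne fun hjm => hwj (hjm ▸ rfl)
  by_cases hwL : w ∈ L j
  · exact eventuallyInfected_leaf hwL
  push Not at hwv
  refine eventuallyInfected_pair_of_le_card (h.center_mem j) hw hwj.symm
    (L j ∪ (univ.erase j).image v) ?_ fun u hu => ?_
  · have hLv : Disjoint (L j) ((univ.erase j).image v) := by
      simp only [disjoint_left, mem_image]
      rintro _ hu ⟨m, -, rfl⟩
      exact h.center_not_mem_leaves m j hu
    rw [card_union_of_disjoint hLv, card_image_of_injective _ h.center_injective,
      card_erase_of_mem (mem_univ j), card_univ, Fintype.card_fin]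
    have := h.le_card_leaves j
    omega
  · simp only [mem_union, mem_image, mem_erase] at hu
    rcases hu with hu | ⟨m, ⟨hmj, -⟩, rfl⟩
    · exact ⟨h.leaves_subset j hu, fun huj => h.center_not_mem_leaves j j (huj ▸ hu),
        fun huw => hwL (huw ▸ hu), .inl (eventuallyInfected_leaf hu)⟩
    · exact ⟨h.center_mem m, h.center_injective.ne hmj, hwv m,
        .inl (h.eventuallyInfected_centers_of_ne hmj.symm)⟩

theorem eventuallyInfected (h : IsZStars V v L) {J : Finset ℕ} (hJ : J ∈ V.powersetCard 2) :
    EventuallyInfected V 3 2 r (starConfig v L) J := by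
  obtain ⟨hJV, hJcard⟩ := mem_powersetCard.mp hJ
  obtain ⟨a, b, hab, rfl⟩ := card_eq_two.mp hJcard
  have ha : a ∈ V := hJV (mem_insert_self _ _)
  have hb : b ∈ V := hJV (mem_insert_of_mem (mem_singleton_self _))
  by_cases hav : ∃ m, v m = a
  · obtain ⟨m, rfl⟩ := hav
    exact h.eventuallyInfected_center m hb hab.symm
  by_cases hbv : ∃ m, v m = b
  · obtain ⟨m, rfl⟩ := hbv
    rw [pair_comm]
    exact h.eventuallyInfected_center m ha hab
  push Not at hav hbv
  refine eventuallyInfected_pair_of_le_card ha hb hab (univ.image v) ?_ fun u hu => ?_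
  · rw [card_image_of_injective _ h.center_injective, card_univ, Fintype.card_fin]
  · obtain ⟨m, -, rfl⟩ := mem_image.mp hu
    refine ⟨h.center_mem m, hav m, hbv m, .inl ?_⟩
    rw [pair_comm]
    exact h.eventuallyInfected_center m ha (hav m).symm

theorem percolates (h : IsZStars V v L) : Percolates V 3 2 r (starConfig v L) :=
  percolates_of_forall_eventuallyInfected h.starConfig_subset_powersetCard
    fun _ => h.eventuallyInfected

end IsZStars

theorem card_starConfig {r : ℕ} {v : Fin r → ℕ} {L : Fin r → Finset ℕ}
    (hv : Function.Injective v) (hvL : ∀ i i', v i ∉ L i') :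
    #(starConfig v L) = ∑ i, #(L i) := by
  rw [starConfig, card_biUnion]
  · refine sum_congr rfl fun i _ => card_image_of_injOn fun u hu u' hu' huu' => ?_
    have : u' ∈ ({v i, u} : Finset ℕ) := (huu' : ({v i, u} : Finset ℕ) = {v i, u'}) ▸ by simp
    grind [hvL i i]
  · intro i _ i' _ hii'
    simp only [Function.onFun, disjoint_left, mem_image]
    rintro _ ⟨u, hu, rfl⟩ ⟨u', hu', huu'⟩
    have : v i' ∈ ({v i, u} : Finset ℕ) := huu' ▸ by simp
    grind [hvL i' i, hv.ne hii']

theorem four_mul_sum_half_add (r : ℕ) :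
    4 * ∑ i ∈ range r, (i + 2) / 2 + (if Even r then 1 else 0) = (r + 1) ^ 2 := by
  induction r with
  | zero => rfl
  | succ r ih =>
    have : (r + 1 + 1) ^ 2 = (r + 1) ^ 2 + 2 * r + 3 := by ring
    rw [sum_range_succ, this, ← ih]
    simp only [Nat.even_iff]
    split_ifs <;> omega

namespace IsZConfig

variable {n r : ℕ} {v : Fin r → ℕ} {Z : Finset (Finset ℕ)}

theorem exists_isZStars (hZ : IsZConfig n r v Z) :
    ∃ L, IsZStars (range n) v L ∧ (∀ i, #(L i) = (i.val + 2) / 2) ∧ Z = starConfig v L := by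
  obtain ⟨L, hL, hdisj, rfl⟩ := hZ
  have hvL (i i') : v i ∉ L i' := by
    intro hi
    rcases eq_or_ne i i' with rfl | hii'
    · exact (hL i).2.2.1 hi
    · exact disjoint_left.mp (hdisj i i' hii') (mem_insert_self _ _) (mem_insert_of_mem hi)
  refine ⟨L, ⟨fun i => (hL i).2.1, fun i => (hL i).1, fun i i' hvi => ?_, hvL,
    fun i i' hii' => (hdisj i i' hii').mono (subset_insert _ _) (subset_insert _ _),
    fun i => (hL i).2.2.2.ge⟩, fun i => (hL i).2.2.2, rfl⟩
  by_contra hii'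
  exact disjoint_left.mp (hdisj i i' hii') (mem_insert_self _ _) (hvi ▸ mem_insert_self _ _)

theorem subset_powersetCard (hZ : IsZConfig n r v Z) : Z ⊆ (range n).powersetCard 2 := by
  obtain ⟨L, hL, -, rfl⟩ := hZ.exists_isZStars
  exact hL.starConfig_subset_powersetCard

theorem percolates (hZ : IsZConfig n r v Z) : Percolates (range n) 3 2 r Z := by
  obtain ⟨L, hL, -, rfl⟩ := hZ.exists_isZStars
  exact hL.percolates

theorem four_mul_card (hZ : IsZConfig n r v Z) :
    4 * #Z = (r + 1) ^ 2 - (if Even r then 1 else 0) := by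
  obtain ⟨L, hL, hcard, rfl⟩ := hZ.exists_isZStars
  have := four_mul_sum_half_add r
  rw [card_starConfig hL.center_injective hL.center_not_mem_leaves,
    sum_congr rfl fun i _ => hcard i, Fin.sum_univ_eq_sum_range (fun i => (i + 2) / 2)]
  omega

end IsZConfig

theorem exists_isZConfig {n r : ℕ} (hn : r * (r + 1) ≤ n) : ∃ v Z, IsZConfig n r v Z := by
  set v : Fin r → ℕ := fun i => i * (r + 1)
  set L : Fin r → Finset ℕ := fun i => Ico (v i + 1) (v i + 1 + (i + 2) / 2)
  have block (i : Fin r) (x : ℕ) (hx : x ∈ insert (v i) (L i)) :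
      i * (r + 1) ≤ x ∧ x < (i + 1) * (r + 1) := by
    simp only [mem_insert, mem_Ico, L, v] at hx
    have := i.isLt
    rw [add_one_mul]
    omega
  have block_end_le (i : Fin r) : (i + 1) * (r + 1) ≤ n :=
    (Nat.mul_le_mul_right _ i.isLt).trans hn
  refine ⟨v, starConfig v L, L, fun i => ⟨fun x hx => ?_, ?_, ?_, ?_⟩, fun i i' hii' => ?_, rfl⟩
  · have := block i x (mem_insert_of_mem hx)
    have := block_end_le i
    exact mem_range.mpr (by omega)
  · have := block i (v i) (mem_insert_self _ _)
    have := block_end_le i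
    exact mem_range.mpr (by omega)
  · simp [L]
  · simp [L]
  · -- `x / (r + 1)` recovers the index of the block containing `x`
    refine disjoint_left.mpr fun x hx hx' => hii' (Fin.ext ?_)
    rw [← Nat.div_eq_of_lt_le (block i x hx).1 (block i x hx).2,
      ← Nat.div_eq_of_lt_le (block i' x hx').1 (block i' x hx').2]

theorem stmt14_general (r : ℕ) :
    ∃ n0, ∀ n ≥ n0,
      (∀ (v : Fin r → ℕ) (Z : Finset (Finset ℕ)), IsZConfig n r v Z →
        Percolates (range n) 3 2 r Z ∧
        4 * Z.card = (r + 1) ^ 2 - (if Even r then 1 else 0)) ∧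
      4 * ellMin n 3 2 r ≤ (r + 1) ^ 2 - (if Even r then 1 else 0) := by
  refine ⟨r * (r + 1), fun n hn => ⟨fun v Z hZ => ⟨hZ.percolates, hZ.four_mul_card⟩, ?_⟩⟩
  obtain ⟨v, Z, hZ⟩ := exists_isZConfig hn
  have hmin : ellMin n 3 2 r ≤ #Z := Nat.sInf_le ⟨Z, hZ.subset_powersetCard, rfl, hZ.percolates⟩
  calc 4 * ellMin n 3 2 r ≤ 4 * #Z := Nat.mul_le_mul_left 4 hmin
    _ = (r + 1) ^ 2 - (if Even r then 1 else 0) := hZ.four_mul_card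

theorem stmt14 (r : ℕ) (hr : 1 ≤ r) :
    ∃ n0, ∀ n ≥ n0,
      (∀ (v : Fin r → ℕ) (Z : Finset (Finset ℕ)), IsZConfig n r v Z →
        Percolates (range n) 3 2 r Z ∧
        4 * Z.card = (r + 1) ^ 2 - (if Even r then 1 else 0)) ∧
      4 * ellMin n 3 2 r ≤ (r + 1) ^ 2 - (if Even r then 1 else 0) :=
  stmt14_general r
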